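/- Let R be a ring and write (-)^+ = Hom_ℤ(-, ℚ/ℤ) (the character module). Let C be a class of left R-modules, all of which are pure injective, and D a class of right R-modules such that X^+ ∈ D for every X ∈ C. If f : A → C is a homomorphism of left R-modules with C ∈ C such that f^+ : C^+ → A^+ is a D-precover of A^+, then f is a C-preenvelope of A. -/

import Mathlib

universe u

/-!
Given `g : A → X` with `X ∈ 𝒞`, the dual `g⁺ : X⁺ → A⁺` has domain in `𝒟`, so it factors as
`f⁺ ∘ h`; dualizing once more gives `h⁺ ∘ σ_C ∘ f = σ_X ∘ g`. The evaluation `σ_X : X → X⁺⁺` is a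
pure monomorphism: a finite linear system with constants in `X` that has a solution in `X⁺⁺` has
one in `X`, since otherwise a character separating the right-hand side from the left-hand sides
yields a solution of the transposed system in `X⁺` that pairs the two to contradictory values.
As `X` is pure injective, `σ_X` has a retraction `r`, and `r ∘ h⁺ ∘ σ_C` extends `g` along `f`.
-/

open MulOpposite


/-- The character group `M⁺ = Hom_ℤ(M, ℚ/ℤ)`. -/
def CharMod (M : Type u) [AddCommGroup M] : Type u := M →+ AddCircle (1 : ℚ)

instance (M : Type u) [AddCommGroup M] : AddCommGroup (CharMod M) :=
  inferInstanceAs (AddCommGroup (M →+ AddCircle (1 : ℚ)))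

instance (M : Type u) [AddCommGroup M] : FunLike (CharMod M) M (AddCircle (1 : ℚ)) :=
  inferInstanceAs (FunLike (M →+ AddCircle (1 : ℚ)) M (AddCircle (1 : ℚ)))

instance (M : Type u) [AddCommGroup M] :
    AddMonoidHomClass (CharMod M) M (AddCircle (1 : ℚ)) :=
  inferInstanceAs (AddMonoidHomClass (M →+ AddCircle (1 : ℚ)) M (AddCircle (1 : ℚ)))

/-- If `M` is a left `R`-module, `M⁺` is a right `R`-module via `(c • r) m = c (r • m)`. -/
instance CharMod.moduleOp (R : Type v) [Ring R] (M : Type u) [AddCommGroup M] [Module R M] :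
    Module Rᵐᵒᵖ (CharMod M) where
  smul r c := (c : M →+ AddCircle (1 : ℚ)).comp (DistribMulAction.toAddMonoidHom M r.unop)
  one_smul c := AddMonoidHom.ext fun m => congrArg c (one_smul R m)
  mul_smul r s c := AddMonoidHom.ext fun m => congrArg c (mul_smul s.unop r.unop m)
  smul_zero r := rfl
  smul_add r c d := rfl
  add_smul r s c := AddMonoidHom.ext fun m => by
    show c ((r.unop + s.unop) • m) = c (r.unop • m) + c (s.unop • m)
    rw [add_smul, map_add]
  zero_smul c := AddMonoidHom.ext fun m => by
    show c ((0 : R) • m) = 0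
    rw [zero_smul, map_zero]

@[simp] lemma CharMod.op_smul_apply {R : Type v} [Ring R] {M : Type u} [AddCommGroup M]
    [Module R M] (r : Rᵐᵒᵖ) (c : CharMod M) (m : M) : (r • c) m = c (r.unop • m) := rfl

/-- If `N` is a right `R`-module, `N⁺` is a left `R`-module via `(r • c) n = c (n • r)`. -/
instance CharMod.moduleUnop (R : Type v) [Ring R] (N : Type u) [AddCommGroup N] [Module Rᵐᵒᵖ N] :
    Module R (CharMod N) where
  smul r c := (c : N →+ AddCircle (1 : ℚ)).comp (DistribMulAction.toAddMonoidHom N (op r))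
  one_smul c := AddMonoidHom.ext fun n => congrArg c (one_smul Rᵐᵒᵖ n)
  mul_smul r s c := AddMonoidHom.ext fun n => by
    show c ((op (r * s)) • n) = c (op s • op r • n)
    rw [← mul_smul]; rfl
  smul_zero r := rfl
  smul_add r c d := rfl
  add_smul r s c := AddMonoidHom.ext fun n => by
    show c ((op (r + s)) • n) = c (op r • n) + c (op s • n)
    rw [show op (r + s) = op r + op s from rfl, add_smul, map_add]
  zero_smul c := AddMonoidHom.ext fun n => by
    show c ((op (0 : R)) • n) = 0
    rw [show op (0 : R) = (0 : Rᵐᵒᵖ) from rfl, zero_smul, map_zero]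

@[simp] lemma CharMod.unop_smul_apply {R : Type v} [Ring R] {N : Type u} [AddCommGroup N]
    [Module Rᵐᵒᵖ N] (r : R) (c : CharMod N) (n : N) : (r • c) n = c (op r • n) := rfl

/-- The dual `f⁺ : C⁺ → A⁺` of a map `f : A → C` of left `R`-modules. -/
def charDual {R : Type v} [Ring R] {A C : Type u} [AddCommGroup A] [Module R A]
    [AddCommGroup C] [Module R C] (f : A →ₗ[R] C) : CharMod C →ₗ[Rᵐᵒᵖ] CharMod A where
  toFun c := (c : C →+ AddCircle (1 : ℚ)).comp f.toAddMonoidHom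
  map_add' _ _ := rfl
  map_smul' r c := AddMonoidHom.ext fun a => (congrArg c (f.map_smul r.unop a)).symm

/-- The canonical evaluation map `σ_M : M → M⁺⁺`. -/
def charEval (R : Type v) [Ring R] (M : Type u) [AddCommGroup M] [Module R M] :
    M →ₗ[R] CharMod (CharMod M) where
  toFun m :=
    { toFun := fun c => c m
      map_zero' := rfl
      map_add' := fun _ _ => rfl }
  map_add' m m' := AddMonoidHom.ext fun c => c.map_add m m'
  map_smul' r m := AddMonoidHom.ext fun c => rfl

/-- A linear map `i : M → N` is a pure monomorphism if it is injective and every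
map from a finitely presented module to `N ⧸ im i` lifts to `N`, i.e. the short exact
sequence `0 → M → N → N ⧸ im i → 0` remains exact after applying `Hom(F, -)` for all
finitely presented `F`. -/
def IsPureMono {R : Type v} [Ring R] {M N : Type u} [AddCommGroup M] [Module R M]
    [AddCommGroup N] [Module R N] (i : M →ₗ[R] N) : Prop :=
  Function.Injective i ∧
    ∀ (F : Type u) [AddCommGroup F] [Module R F], Module.FinitePresentation R F →
      ∀ g : F →ₗ[R] (N ⧸ LinearMap.range i),
        ∃ h : F →ₗ[R] N, (LinearMap.range i).mkQ.comp h = g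

/-- A module `E` is pure injective if every map to `E` extends along pure monomorphisms. -/
def IsPureInjective (R : Type v) [Ring R] (E : Type u) [AddCommGroup E] [Module R E] : Prop :=
  ∀ (M N : Type u) [AddCommGroup M] [Module R M] [AddCommGroup N] [Module R N]
    (i : M →ₗ[R] N), IsPureMono i →
      ∀ f : M →ₗ[R] E, ∃ g : N →ₗ[R] E, g.comp i = f

lemma CharMod.sum_apply {M : Type u} [AddCommGroup M] {ι : Type*} (s : Finset ι)
    (c : ι → CharMod M) (m : M) : (∑ i ∈ s, c i) m = ∑ i ∈ s, c i m :=
  AddMonoidHom.finsetSum_apply c s m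

lemma CharMod.exists_apply_ne_zero_of_notMem {M : Type u} [AddCommGroup M] {S : AddSubgroup M}
    {m : M} (hm : m ∉ S) : ∃ χ : CharMod M, (∀ s ∈ S, χ s = 0) ∧ χ m ≠ 0 := by
  have hm' : (m : M ⧸ S) ≠ 0 := by rwa [Ne, QuotientAddGroup.eq_zero_iff]
  obtain ⟨c, hc⟩ := CharacterModule.exists_character_apply_ne_zero_of_ne_zero hm'
  refine ⟨(c : M ⧸ S →+ AddCircle (1 : ℚ)).comp (QuotientAddGroup.mk' S), fun s hs => ?_, hc⟩
  show c (s : M ⧸ S) = 0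
  rw [(QuotientAddGroup.eq_zero_iff s).mpr hs, map_zero]

lemma charEval_injective (R : Type v) [Ring R] (M : Type u) [AddCommGroup M] [Module R M] :
    Function.Injective (charEval R M) := fun a b hab =>
  sub_eq_zero.mp <| CharacterModule.eq_zero_of_character_apply fun c => by
    rw [map_sub, sub_eq_zero]
    exact DFunLike.congr_fun hab c

section LinearSystem

variable {S : Type*} [Ring S] {ι κ : Type*} [Fintype ι]

/-- Only additive: for noncommutative `S`, `z ↦ ∑ j, a k j • z j` is not `S`-linear. -/
def linearSystem (a : Matrix κ ι S) (M : Type*) [AddCommGroup M] [Module S M] :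
    (ι → M) →+ (κ → M) where
  toFun z k := ∑ j, a k j • z j
  map_zero' := by ext; simp
  map_add' z z' := by ext; simp [smul_add, Finset.sum_add_distrib]

variable {M : Type*} [AddCommGroup M] [Module S M]

lemma linearSystem_apply (a : Matrix κ ι S) (z : ι → M) (k : κ) :
    linearSystem a M z k = ∑ j, a k j • z j := rfl

lemma linearSystem_single [DecidableEq ι] (a : Matrix κ ι S) (j : ι) (x : M) :
    linearSystem a M (Pi.single j x) = fun k => a k j • x := by
  ext k
  rw [linearSystem_apply, Finset.sum_eq_single j (fun i _ hi => by simp [hi]) (by simp),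
    Pi.single_eq_same]

end LinearSystem

lemma sum_linearSystem_apply_eq_sum_apply_transpose {R : Type v} [Ring R]
    {ι κ : Type*} [Fintype ι] [Fintype κ] {N : Type u} [AddCommGroup N] [Module Rᵐᵒᵖ N]
    (a : Matrix κ ι R) (y : ι → CharMod N) (c : κ → N) :
    ∑ k, linearSystem a (CharMod N) y k (c k) =
      ∑ j, y j (linearSystem (a.transpose.map op) N c j) := by
  simp only [linearSystem_apply, CharMod.sum_apply, CharMod.unop_smul_apply, map_sum,
    Matrix.map_apply, Matrix.transpose_apply]
  exact Finset.sum_comm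

/-- A character `χ` of `X^κ` killing all left-hand sides gives, through its components, a solution
`(χₖ)ₖ` of the transposed homogeneous system in `X⁺`, against which `χ w` pairs to zero. -/
lemma exists_linearSystem_eq_of_charEval {R : Type v} [Ring R] {X : Type u} [AddCommGroup X]
    [Module R X] {ι κ : Type*} [Fintype ι] [Fintype κ] (a : Matrix κ ι R) (w : κ → X)
    (hsol : ∃ y, linearSystem a (CharMod (CharMod X)) y = charEval R X ∘ w) :
    ∃ z, linearSystem a X z = w := by
  classical
  obtain ⟨y, hy⟩ := hsol
  by_contra! hno
  obtain ⟨χ, hχS, hχw⟩ :=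
    CharMod.exists_apply_ne_zero_of_notMem (S := (linearSystem a X).range) (m := w)
      (by rintro ⟨z, hz⟩; exact hno z hz)
  let c : κ → CharMod X := fun k => (χ : (κ → X) →+ AddCircle (1 : ℚ)).comp
    (AddMonoidHom.single (fun _ => X) k)
  have hχ : ∀ u, χ u = ∑ k, c k (u k) := fun u => by
    conv_lhs => rw [← Finset.univ_sum_single u]
    exact map_sum χ _ _
  have hc : linearSystem (a.transpose.map op) (CharMod X) c = 0 := by
    funext j
    refine DFunLike.ext _ _ fun x => ?_
    have hx := hχS _ ⟨Pi.single j x, rfl⟩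
    rw [linearSystem_single, hχ] at hx
    show _ = (0 : AddCircle (1 : ℚ))
    simpa [linearSystem_apply, CharMod.sum_apply] using hx
  apply hχw
  calc χ w = ∑ k, linearSystem a _ y k (c k) := by
        rw [hχ, hy]; rfl
    _ = 0 := by
        rw [sum_linearSystem_apply_eq_sum_apply_transpose, hc]
        simp only [Pi.zero_apply, map_zero, Finset.sum_const_zero]

lemma LinearMap.exists_comp_eq_of_ker_le {R M N P : Type*} [Ring R] [AddCommGroup M]
    [AddCommGroup N] [AddCommGroup P] [Module R M] [Module R N] [Module R P] {π : M →ₗ[R] N}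
    (hπ : Function.Surjective π) (H : M →ₗ[R] P) (hker : LinearMap.ker π ≤ LinearMap.ker H) :
    ∃ H' : N →ₗ[R] P, H' ∘ₗ π = H := by
  refine ⟨(LinearMap.ker π).liftQ H hker ∘ₗ (π.quotKerEquivOfSurjective hπ).symm.toLinearMap, ?_⟩
  ext m
  have hm : (π.quotKerEquivOfSurjective hπ).symm (π m) = Submodule.Quotient.mk m := by
    rw [LinearEquiv.symm_apply_eq]; rfl
  simp [hm]

/-- A map from a finitely presented `F` to the cokernel is a finite system, with the generators
of `F` as unknowns and its relations as equations. -/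
lemma isPureMono_of_linearSystem {R : Type u} [Ring R] {M N : Type u} [AddCommGroup M]
    [Module R M] [AddCommGroup N] [Module R N] (i : M →ₗ[R] N) (hi : Function.Injective i)
    (hsys : ∀ (ι κ : Type u) [Fintype ι] [Fintype κ] (a : Matrix κ ι R) (w : κ → M),
      (∃ y, linearSystem a N y = i ∘ w) → ∃ z, linearSystem a M z = w) :
    IsPureMono i := by
  refine ⟨hi, fun F _ _ hF g => ?_⟩
  obtain ⟨s, hspan, t, ht⟩ := hF.out
  set π := Finsupp.linearCombination R ((↑) : s → F)
  have hπ : Function.Surjective π := by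
    rw [← LinearMap.range_eq_top, Finsupp.range_linearCombination, Subtype.range_coe, hspan]
  set q := (LinearMap.range i).mkQ
  choose y hy using fun j : s => Submodule.mkQ_surjective (LinearMap.range i) (g j)
  set Y := Finsupp.linearCombination R y
  have hYg : q ∘ₗ Y = g ∘ₗ π := Finsupp.lhom_ext fun j r => by simp [Y, π, q, hy]
  have hrel : ∀ k : t, Y k ∈ LinearMap.range i := fun k => by
    have hk : (k : s →₀ R) ∈ LinearMap.ker π := ht ▸ Submodule.subset_span k.2
    rw [← Submodule.Quotient.mk_eq_zero, ← Submodule.mkQ_apply, ← LinearMap.comp_apply, hYg,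
      LinearMap.comp_apply, LinearMap.mem_ker.mp hk, map_zero]
  choose w hw using hrel
  let a : Matrix t s R := Matrix.of fun k j => (k : s →₀ R) j
  have ha : ∀ {P : Type u} [AddCommGroup P] [Module R P] (z : s → P) (k : t),
      linearSystem a P z k = Finsupp.linearCombination R z k := fun z k => by
    rw [linearSystem_apply, Finsupp.linearCombination_apply, Finsupp.sum_fintype _ _ (by simp)]
    rfl
  obtain ⟨z, hz⟩ := hsys s t a w ⟨y, funext fun k => (ha y k).trans (hw k).symm⟩
  set Z := Finsupp.linearCombination R z
  obtain ⟨H, hH⟩ := LinearMap.exists_comp_eq_of_ker_le hπ (Y - i ∘ₗ Z) <| by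
    rw [← ht, Submodule.span_le]
    intro k hk
    simp only [SetLike.mem_coe, LinearMap.mem_ker, LinearMap.sub_apply, LinearMap.comp_apply]
    rw [← hw ⟨k, hk⟩, ← ha z ⟨k, hk⟩, hz, sub_self]
  refine ⟨H, (LinearMap.cancel_right hπ).mp ?_⟩
  have hqi : q ∘ₗ i = 0 := LinearMap.ext fun m => (Submodule.Quotient.mk_eq_zero _).mpr ⟨m, rfl⟩
  rw [LinearMap.comp_assoc, hH, LinearMap.comp_sub, hYg, ← LinearMap.comp_assoc, hqi,
    LinearMap.zero_comp, sub_zero]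

lemma charEval_isPureMono (R : Type u) [Ring R] (X : Type u) [AddCommGroup X] [Module R X] :
    IsPureMono (charEval R X) :=
  isPureMono_of_linearSystem _ (charEval_injective R X) fun _ _ _ _ a w =>
    exists_linearSystem_eq_of_charEval a w

lemma IsPureInjective.exists_retraction_charEval {R : Type u} [Ring R] {X : Type u}
    [AddCommGroup X] [Module R X] (hX : IsPureInjective R X) :
    ∃ r : CharMod (CharMod X) →ₗ[R] X, r ∘ₗ charEval R X = LinearMap.id :=
  hX X _ (charEval R X) (charEval_isPureMono R X) LinearMap.id

def charDualOp {R : Type v} [Ring R] {N N' : Type u} [AddCommGroup N] [Module Rᵐᵒᵖ N]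
    [AddCommGroup N'] [Module Rᵐᵒᵖ N'] (h : N →ₗ[Rᵐᵒᵖ] N') : CharMod N' →ₗ[R] CharMod N where
  toFun c := (c : N' →+ AddCircle (1 : ℚ)).comp h.toAddMonoidHom
  map_add' _ _ := rfl
  map_smul' r c := AddMonoidHom.ext fun n => (congrArg c (h.map_smul (op r) n)).symm

lemma charDualOp_comp_charEval_comp {R : Type v} [Ring R] {A C X : Type u} [AddCommGroup A]
    [Module R A] [AddCommGroup C] [Module R C] [AddCommGroup X] [Module R X] {f : A →ₗ[R] C}
    {g : A →ₗ[R] X} {h : CharMod X →ₗ[Rᵐᵒᵖ] CharMod C} (hfg : charDual f ∘ₗ h = charDual g) :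
    charDualOp h ∘ₗ charEval R C ∘ₗ f = charEval R X ∘ₗ g :=
  LinearMap.ext fun a => AddMonoidHom.ext fun χ => DFunLike.congr_fun (DFunLike.congr_fun hfg χ) a

theorem stmt1_general {R : Type u} [Ring R] {A C : Type u}
    [AddCommGroup A] [Module R A] [AddCommGroup C] [Module R C]
    (𝒞 : ∀ (X : Type u) [AddCommGroup X] [Module R X], Prop)
    (𝒟 : ∀ (Y : Type u) [AddCommGroup Y] [Module Rᵐᵒᵖ Y], Prop)
    (hCD : ∀ (X : Type u) [AddCommGroup X] [Module R X], 𝒞 X → 𝒟 (CharMod X))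
    (hPI : ∀ (X : Type u) [AddCommGroup X] [Module R X], 𝒞 X → IsPureInjective R X)
    (f : A →ₗ[R] C)
    -- `f⁺ : C⁺ → A⁺` is a `𝒟`-precover of `A⁺`:
    (hfact : ∀ (Y : Type u) [AddCommGroup Y] [Module Rᵐᵒᵖ Y], 𝒟 Y →
      ∀ g : Y →ₗ[Rᵐᵒᵖ] CharMod A, ∃ h : Y →ₗ[Rᵐᵒᵖ] CharMod C, (charDual f).comp h = g) :
    -- `f` is a `𝒞`-preenvelope of `A`:
    ∀ (X : Type u) [AddCommGroup X] [Module R X], 𝒞 X →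
      ∀ g : A →ₗ[R] X, ∃ h : C →ₗ[R] X, h.comp f = g := by
  intro X _ _ hX g
  obtain ⟨h, hfg⟩ := hfact (CharMod X) (hCD X hX) (charDual g)
  obtain ⟨r, hr⟩ := (hPI X hX).exists_retraction_charEval
  refine ⟨r ∘ₗ charDualOp h ∘ₗ charEval R C, ?_⟩
  rw [LinearMap.comp_assoc, LinearMap.comp_assoc, charDualOp_comp_charEval_comp hfg,
    ← LinearMap.comp_assoc, hr, LinearMap.id_comp]

/-- **Theorem 1.2 / 3.2.** Let `𝒞` be a class of left `R`-modules, all pure injective, and `𝒟`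
a class of right `R`-modules with `𝒞⁺ ⊆ 𝒟`. If `f : A → C` with `C ∈ 𝒞` is such that
`f⁺ : C⁺ → A⁺` is a `𝒟`-precover of `A⁺`, then `f` is a `𝒞`-preenvelope of `A`. -/
theorem stmt1 {R : Type u} [Ring R] {A C : Type u}
    [AddCommGroup A] [Module R A] [AddCommGroup C] [Module R C]
    (𝒞 : ∀ (X : Type u) [AddCommGroup X] [Module R X], Prop)
    (𝒟 : ∀ (Y : Type u) [AddCommGroup Y] [Module Rᵐᵒᵖ Y], Prop)
    (hCD : ∀ (X : Type u) [AddCommGroup X] [Module R X], 𝒞 X → 𝒟 (CharMod X))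
    (hPI : ∀ (X : Type u) [AddCommGroup X] [Module R X], 𝒞 X → IsPureInjective R X)
    (hC : 𝒞 C) (f : A →ₗ[R] C)
    -- `f⁺ : C⁺ → A⁺` is a `𝒟`-precover of `A⁺`:
    (hdom : 𝒟 (CharMod C))
    (hfact : ∀ (Y : Type u) [AddCommGroup Y] [Module Rᵐᵒᵖ Y], 𝒟 Y →
      ∀ g : Y →ₗ[Rᵐᵒᵖ] CharMod A, ∃ h : Y →ₗ[Rᵐᵒᵖ] CharMod C, (charDual f).comp h = g) :
    -- `f` is a `𝒞`-preenvelope of `A`: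
    ∀ (X : Type u) [AddCommGroup X] [Module R X], 𝒞 X →
      ∀ g : A →ₗ[R] X, ∃ h : C →ₗ[R] X, h.comp f = g :=
  stmt1_general 𝒞 𝒟 hCD hPI f hfact
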